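/- Let a = (p,q) be a primitive vector in ℤ^{n+1} with q ≥ 1, and let γ ∈ SL(n+1,ℤ) satisfy (p,q)γ = (0,…,0,1). Then for any Q > 0, the matrix h(p/q)a(Q) can be written as γ·h'·a(Q/q), where h' ∈ H; explicitly, h(p/q)·a(q) ∈ γH, where h(x) is the lower-triangular unipotent matrix with bottom-left row −x and a(y) = diag(y^{1/n}I_n, y^{-1}). -/

import Mathlib

/-!
The row vector `v = (p, q)` is sent to `(0,…,0,1)` both by `γ` and by `g = h(p/q) a(q)`:
`v h(p/q) = (0,…,0,q)`, and `a(q)` divides the last entry by `q`. Hence `γ⁻¹ g` fixes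
`(0,…,0,1)`, i.e. lies in `H`. For general `Q`, write `a(Q) = a(q) a(Q/q)`.
-/

open Matrix

noncomputable section

abbrev SL (m : ℕ) (R : Type) [CommRing R] := Matrix.SpecialLinearGroup (Fin m) R

def lastVec (n : ℕ) (R : Type) [CommRing R] : Fin (n+1) → R := Pi.single (Fin.last n) 1

def Primitive {n : ℕ} (a : Fin (n+1) → ℤ) : Prop := Finset.univ.gcd a = 1

/-- The stabilizer of the row vector (0,...,0,1) under right multiplication. -/
def stab (n : ℕ) (R : Type) [CommRing R] : Subgroup (SL (n+1) R) where
  carrier := {γ | Matrix.vecMul (lastVec n R) (γ : Matrix (Fin (n+1)) (Fin (n+1)) R) = lastVec n R}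
  one_mem' := by simp
  mul_mem' := by
    intro a b ha hb
    simp only [Set.mem_setOf_eq] at *
    rw [Matrix.SpecialLinearGroup.coe_mul, ← Matrix.vecMul_vecMul, ha, hb]
  inv_mem' := by
    intro a ha
    simp only [Set.mem_setOf_eq] at *
    conv_lhs => rw [← ha]
    rw [Matrix.vecMul_vecMul, ← Matrix.SpecialLinearGroup.coe_mul, mul_inv_cancel,
      Matrix.SpecialLinearGroup.coe_one, Matrix.vecMul_one]

/-- The diagonal matrix a(y) = diag(y^{1/n} I_n, y⁻¹). -/
def aMat (n : ℕ) (y : ℝ) : Matrix (Fin (n+1)) (Fin (n+1)) ℝ :=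
  Matrix.diagonal (fun i => if i = Fin.last n then y⁻¹ else y ^ ((n : ℝ)⁻¹))

/-- The unipotent matrix h(x), with bottom-left row −x. -/
def hMat {n : ℕ} (x : Fin n → ℝ) : Matrix (Fin (n+1)) (Fin (n+1)) ℝ :=
  fun i j => if i = j then 1 else
    if i = Fin.last n then (if hj : j = Fin.last n then 0 else -x (j.castPred hj)) else 0

/-- The unipotent integer matrix u(x). -/
def uMat {n : ℕ} (x : Fin n → ℤ) : Matrix (Fin (n+1)) (Fin (n+1)) ℤ :=
  fun i j => if i = j then 1 else
    if i = Fin.last n then (if hj : j = Fin.last n then 0 else x (j.castPred hj)) else 0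

/-- The Euclidean norm on ℝ^n. -/
def enorm {n : ℕ} (v : Fin n → ℝ) : ℝ := Real.sqrt (∑ i, (v i)^2)

abbrev mapSL (n : ℕ) : SL (n+1) ℤ →* SL (n+1) ℝ :=
  Matrix.SpecialLinearGroup.map (Int.castRingHom ℝ)

instance (m : ℕ) : TopologicalSpace (SL m ℝ) :=
  TopologicalSpace.induced (fun A => (A : Matrix (Fin m) (Fin m) ℝ)) inferInstance

lemma det_hMat {n : ℕ} (x : Fin n → ℝ) : (hMat x).det = 1 := by
  rw [Matrix.det_of_isLowerTriangular]
  · simp [hMat]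
  · intro i j hij
    have hij : i < j := OrderDual.toDual_lt_toDual.mp hij
    simp [hMat, hij.ne, (hij.trans_le (Fin.le_last j)).ne]

lemma det_aMat {n : ℕ} (hn : n ≠ 0) {y : ℝ} (hy : 0 < y) : (aMat n y).det = 1 := by
  rw [aMat, Matrix.det_diagonal, Fin.prod_univ_castSucc]
  simp only [(Fin.castSucc_lt_last _).ne, if_false, if_true, Finset.prod_const,
    Finset.card_univ, Fintype.card_fin]
  rw [← Real.rpow_natCast, ← Real.rpow_mul hy.le, inv_mul_cancel₀ (Nat.cast_ne_zero.mpr hn),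
    Real.rpow_one, mul_inv_cancel₀ hy.ne']

lemma aMat_mul_aMat {n : ℕ} {y z : ℝ} (hy : 0 < y) (hz : 0 < z) :
    aMat n y * aMat n z = aMat n (y * z) := by
  rw [aMat, aMat, aMat, Matrix.diagonal_mul_diagonal]
  congr 1
  ext i
  split_ifs
  · exact (mul_inv y z).symm
  · exact (Real.mul_rpow hy.le hz.le).symm

lemma lastVec_eq_snoc (n : ℕ) (R : Type) [CommRing R] : lastVec n R = Fin.snoc 0 1 := by
  ext j
  induction j using Fin.lastCases <;> simp [lastVec, (Fin.castSucc_lt_last _).ne]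

lemma snoc_vecMul_hMat {n : ℕ} (u x : Fin n → ℝ) (c : ℝ) :
    Fin.snoc u c ᵥ* hMat x = Fin.snoc (u - c • x) c := by
  ext j
  induction j using Fin.lastCases <;>
    simp [vecMul, dotProduct, Fin.sum_univ_castSucc, hMat, (Fin.castSucc_lt_last _).ne,
      (Fin.castSucc_lt_last _).ne', sub_eq_add_neg]

lemma snoc_zero_vecMul_aMat (n : ℕ) (c y : ℝ) :
    Fin.snoc 0 c ᵥ* aMat n y = Fin.snoc 0 (c * y⁻¹) := by
  ext j
  rw [aMat, vecMul_diagonal]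
  induction j using Fin.lastCases <;> simp [(Fin.castSucc_lt_last _).ne]

lemma snoc_vecMul_hMat_div_mul_aMat {n : ℕ} (u : Fin n → ℝ) {c : ℝ} (hc : c ≠ 0) :
    Fin.snoc u c ᵥ* (hMat (fun i => u i / c) * aMat n c) = lastVec n ℝ := by
  have hu : u - c • (fun i => u i / c) = 0 := by
    ext i
    simp [mul_div_cancel₀ _ hc]
  rw [← vecMul_vecMul, snoc_vecMul_hMat, hu, snoc_zero_vecMul_aMat, mul_inv_cancel₀ hc,
    lastVec_eq_snoc]

lemma vecMul_map_eq_lastVec {n : ℕ} {R S : Type} [CommRing R] [CommRing S] (f : R →+* S)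
    {γ : SL (n+1) R} {v : Fin (n+1) → R}
    (hγ : v ᵥ* (γ : Matrix (Fin (n+1)) (Fin (n+1)) R) = lastVec n R) :
    (f ∘ v) ᵥ* (Matrix.SpecialLinearGroup.map f γ : Matrix (Fin (n+1)) (Fin (n+1)) S)
      = lastVec n S := by
  ext j
  rw [Matrix.SpecialLinearGroup.map_apply_coe, RingHom.mapMatrix_apply, ← RingHom.map_vecMul,
    hγ, lastVec_eq_snoc, lastVec_eq_snoc]
  induction j using Fin.lastCases <;> simp

lemma exists_mem_stab_eq_mul {n : ℕ} {R : Type} [CommRing R] {γ g : SL (n+1) R}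
    {v : Fin (n+1) → R} (hγ : v ᵥ* (γ : Matrix (Fin (n+1)) (Fin (n+1)) R) = lastVec n R)
    (hg : v ᵥ* (g : Matrix (Fin (n+1)) (Fin (n+1)) R) = lastVec n R) :
    ∃ h ∈ stab n R, (g : Matrix (Fin (n+1)) (Fin (n+1)) R) = γ * h := by
  refine ⟨γ⁻¹ * g, ?_, by rw [← Matrix.SpecialLinearGroup.coe_mul, mul_inv_cancel_left]⟩
  have hγ' : lastVec n R ᵥ* ((γ⁻¹ : SL (n+1) R) : Matrix (Fin (n+1)) (Fin (n+1)) R) = v := by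
    rw [← hγ, vecMul_vecMul, ← Matrix.SpecialLinearGroup.coe_mul, mul_inv_cancel,
      Matrix.SpecialLinearGroup.coe_one, vecMul_one]
  change lastVec n R ᵥ* _ = _
  rw [Matrix.SpecialLinearGroup.coe_mul, ← vecMul_vecMul, hγ', hg]

theorem stmt11_general (n : ℕ) (hn : 1 ≤ n) (p : Fin n → ℤ) (q : ℤ) (hq : 1 ≤ q)
    (γ : SL (n+1) ℤ)
    (hγ : Matrix.vecMul (Fin.snoc p q) (γ : Matrix (Fin (n+1)) (Fin (n+1)) ℤ) = lastVec n ℤ) :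
    (∃ h ∈ stab n ℝ,
      hMat (fun i => (p i : ℝ) / (q : ℝ)) * aMat n (q : ℝ)
        = ((mapSL n γ : SL (n+1) ℝ) : Matrix (Fin (n+1)) (Fin (n+1)) ℝ)
            * ((h : SL (n+1) ℝ) : Matrix (Fin (n+1)) (Fin (n+1)) ℝ))
    ∧ ∀ Q : ℝ, 0 < Q → ∃ h ∈ stab n ℝ,
        hMat (fun i => (p i : ℝ) / (q : ℝ)) * aMat n Q
          = ((mapSL n γ : SL (n+1) ℝ) : Matrix (Fin (n+1)) (Fin (n+1)) ℝ)
              * ((h : SL (n+1) ℝ) : Matrix (Fin (n+1)) (Fin (n+1)) ℝ)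
              * aMat n (Q / (q : ℝ)) := by
  have hq0 : (0 : ℝ) < q := by exact_mod_cast hq
  let g : SL (n+1) ℝ := ⟨hMat (fun i => (p i : ℝ) / q) * aMat n q, by
    rw [det_mul, det_hMat, det_aMat (by omega) hq0, one_mul]⟩
  have hgv : (Int.castRingHom ℝ ∘ Fin.snoc p q) ᵥ* (g : Matrix (Fin (n+1)) (Fin (n+1)) ℝ)
      = lastVec n ℝ := by
    rw [Fin.comp_snoc]
    exact snoc_vecMul_hMat_div_mul_aMat _ hq0.ne'
  obtain ⟨h, hmem, hgh⟩ := exists_mem_stab_eq_mul (vecMul_map_eq_lastVec _ hγ) hgv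
  refine ⟨⟨h, hmem, hgh⟩, fun Q hQ => ⟨h, hmem, ?_⟩⟩
  rw [← hgh, mul_assoc, aMat_mul_aMat hq0 (div_pos hQ hq0), mul_div_cancel₀ _ hq0.ne']

/-- If (p,q)γ = (0,…,0,1), then h(p/q)a(q) ∈ γH; more generally, for every Q > 0,
h(p/q)a(Q) = γ·h'·a(Q/q) with h' ∈ H. -/
theorem stmt11 (n : ℕ) (hn : 1 ≤ n) (p : Fin n → ℤ) (q : ℤ) (hq : 1 ≤ q)
    (hprim : Primitive (Fin.snoc p q))
    (γ : SL (n+1) ℤ)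
    (hγ : Matrix.vecMul (Fin.snoc p q) (γ : Matrix (Fin (n+1)) (Fin (n+1)) ℤ) = lastVec n ℤ) :
    (∃ h ∈ stab n ℝ,
      hMat (fun i => (p i : ℝ) / (q : ℝ)) * aMat n (q : ℝ)
        = ((mapSL n γ : SL (n+1) ℝ) : Matrix (Fin (n+1)) (Fin (n+1)) ℝ)
            * ((h : SL (n+1) ℝ) : Matrix (Fin (n+1)) (Fin (n+1)) ℝ))
    ∧ ∀ Q : ℝ, 0 < Q → ∃ h ∈ stab n ℝ,
        hMat (fun i => (p i : ℝ) / (q : ℝ)) * aMat n Q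
          = ((mapSL n γ : SL (n+1) ℝ) : Matrix (Fin (n+1)) (Fin (n+1)) ℝ)
              * ((h : SL (n+1) ℝ) : Matrix (Fin (n+1)) (Fin (n+1)) ℝ)
              * aMat n (Q / (q : ℝ)) :=
  stmt11_general n hn p q hq γ hγ
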